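/- In the linear–Gaussian model above, with $u^\lambda_t := (r + \gamma Z_1') - X_0 + \lambda C$ and $D_t := t^2\sigma^2 + (1-t)^2$, the variance of the $\lambda$-target equals $\mathrm{Var}(u^\lambda_t) = 1 + \gamma^2\sigma^2 + \frac{\sigma^2}{D_t}\big(\lambda^2 - 2\lambda(\gamma(1-t) + \rho t)\big)$, and this quadratic in $\lambda$ is minimized at $\lambda^\star(t) = \gamma(1-t) + \rho t$. -/

import Mathlib

open MeasureTheory ProbabilityTheory

open Real
open scoped NNReal ENNReal

section Aux
lemma gpdf_eq (x : ℝ) : gaussianPDFReal 0 1 x = (Real.sqrt (2 * π))⁻¹ * Real.exp (-(1/2) * x ^ 2) := by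
  simp only [gaussianPDFReal, NNReal.coe_one, mul_one, sub_zero]
  congr 1
  ring

lemma integrable_sq_exp : Integrable (fun x : ℝ => x ^ 2 * Real.exp (-(1/2) * x ^ 2)) := by
  have := integrable_rpow_mul_exp_neg_mul_sq (b := 1/2) (by norm_num) (s := 2) (by norm_num)
  have h2 : ∀ x : ℝ, x ^ (2:ℝ) = x ^ (2:ℕ) := fun x => by
    rw [show (2:ℝ) = ((2:ℕ):ℝ) by norm_num, Real.rpow_natCast]
  simpa [h2] using this

lemma integral_sq_exp : ∫ x : ℝ, x ^ 2 * Real.exp (-(1/2) * x ^ 2) = Real.sqrt (2 * π) := by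
  have h2 : ∀ x : ℝ, x ^ (2:ℝ) = x ^ (2:ℕ) := fun x => by
    rw [show (2:ℝ) = ((2:ℕ):ℝ) by norm_num, Real.rpow_natCast]
  have hsplit := intervalIntegral.integral_Iic_add_Ioi (μ := volume) (b := (0:ℝ))
    (integrable_sq_exp.integrableOn) (integrable_sq_exp.integrableOn)
  have hneg : (∫ x in Set.Iic (0:ℝ), x ^ 2 * Real.exp (-(1/2) * x ^ 2))
      = ∫ x in Set.Ioi (0:ℝ), x ^ 2 * Real.exp (-(1/2) * x ^ 2) := by
    rw [show (0:ℝ) = -0 by norm_num, ← integral_comp_neg_Ioi]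
    norm_num
  have hIoi : (∫ x in Set.Ioi (0:ℝ), x ^ 2 * Real.exp (-(1/2) * x ^ 2)) = Real.sqrt (2 * π) / 2 := by
    have h := integral_rpow_mul_exp_neg_mul_rpow (p := 2) (q := 2) (b := 1/2) (by norm_num) (by norm_num) (by norm_num)
    simp_rw [h2] at h
    rw [h]
    have hG : Real.Gamma ((2 + 1) / 2) = Real.sqrt π / 2 := by
      rw [show ((2:ℝ)+1)/2 = 1/2 + 1 by norm_num, Real.Gamma_add_one (by norm_num),
        Real.Gamma_one_half_eq]
      ring
    have hpow : ((1:ℝ)/2) ^ (-((2:ℝ) + 1) / 2) = 2 * Real.sqrt 2 := by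
      rw [show (1:ℝ)/2 = 2⁻¹ by norm_num, Real.inv_rpow (by norm_num),
        show (-((2:ℝ)+1)/2) = -(3/2) by norm_num, Real.rpow_neg (by norm_num), inv_inv,
        show (3:ℝ)/2 = 1 + 1/2 by norm_num, Real.rpow_add (by norm_num), Real.rpow_one,
        ← Real.sqrt_eq_rpow]
    rw [hG, hpow, Real.sqrt_mul (by norm_num)]
    ring
  rw [← hsplit, hneg, hIoi]; ring

lemma gaussianReal_std_eq : gaussianReal 0 1 = volume.withDensity (fun x => ENNReal.ofReal ((Real.sqrt (2*π))⁻¹ * Real.exp (-(1/2) * x ^ 2))) := by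
  rw [gaussianReal_of_var_ne_zero _ one_ne_zero]
  congr 1
  ext x
  rw [gaussianPDF, gpdf_eq]

lemma integrable_sq_gauss : Integrable (fun x : ℝ => x ^ 2) (gaussianReal 0 1) := by
  rw [gaussianReal_std_eq, integrable_withDensity_iff]
  · exact (integrable_sq_exp.const_mul ((Real.sqrt (2*π))⁻¹)).congr
      (by filter_upwards with x; rw [ENNReal.toReal_ofReal (by positivity)]; ring)
  · exact (((measurable_id.pow_const 2).const_mul (-(1/2)) |>.exp).const_mul _).ennreal_ofReal
  · filter_upwards with x; exact ENNReal.ofReal_lt_top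

lemma memLp_id_gauss : MemLp (id : ℝ → ℝ) 2 (gaussianReal 0 1) :=
  (memLp_two_iff_integrable_sq aestronglyMeasurable_id).2 (by simpa using integrable_sq_gauss)

lemma integral_id_gauss : ∫ x, x ∂(gaussianReal 0 1) = 0 := by
  have hmap : (gaussianReal 0 1).map (fun x => (-1 : ℝ) * x) = gaussianReal 0 1 := by
    have := gaussianReal_map_const_mul (μ := 0) (v := 1) (-1)
    simpa using this
  have h2 := integral_map (μ := gaussianReal 0 1) (φ := fun x => (-1:ℝ)*x)
    (by fun_prop) (f := fun x : ℝ => x) measurable_id.aestronglyMeasurable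
  rw [hmap, integral_const_mul] at h2
  linarith

lemma integral_sq_gauss : ∫ x, x ^ 2 ∂(gaussianReal 0 1) = 1 := by
  rw [gaussianReal_std_eq]
  simp_rw [ENNReal.ofReal]
  rw [integral_withDensity_eq_integral_smul
      (f := fun x => (((Real.sqrt (2*π))⁻¹ * Real.exp (-(1/2) * x ^ 2)).toNNReal))
      (by fun_prop) (fun x => x ^ 2)]
  · have : ∀ x : ℝ, ((((Real.sqrt (2*π))⁻¹ * Real.exp (-(1/2) * x ^ 2)).toNNReal) : ℝ≥0) • x ^ 2
        = (Real.sqrt (2*π))⁻¹ * (x ^ 2 * Real.exp (-(1/2) * x ^ 2)) := by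
      intro x
      rw [NNReal.smul_def, smul_eq_mul, Real.coe_toNNReal _ (by positivity)]
      ring
    simp_rw [this]
    rw [integral_const_mul, integral_sq_exp]
    rw [inv_mul_cancel₀ (by positivity)]

variable {Ω : Type*} [MeasurableSpace Ω] {P : Measure Ω} [IsProbabilityMeasure P]

lemma memLp_of_gauss {X : Ω → ℝ} (hX : Measurable X) (hmap : Measure.map X P = gaussianReal 0 1) :
    MemLp X 2 P := by
  have := memLp_id_gauss
  rw [← hmap] at this
  rw [memLp_map_measure_iff aestronglyMeasurable_id hX.aemeasurable] at this
  simpa using this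

lemma integral_of_gauss {X : Ω → ℝ} (hX : Measurable X) (hmap : Measure.map X P = gaussianReal 0 1) :
    ∫ ω, X ω ∂P = 0 := by
  have h := integral_map (μ := P) hX.aemeasurable (f := fun x : ℝ => x)
    measurable_id.aestronglyMeasurable
  rw [hmap, integral_id_gauss] at h
  exact h.symm

lemma variance_of_gauss {X : Ω → ℝ} (hX : Measurable X) (hmap : Measure.map X P = gaussianReal 0 1) :
    variance X P = 1 := by
  rw [variance_eq_sub (memLp_of_gauss hX hmap), integral_of_gauss hX hmap]
  have h := integral_map (μ := P) hX.aemeasurable (f := fun x : ℝ => x ^ 2)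
    (measurable_id.pow_const 2).aestronglyMeasurable
  rw [hmap, integral_sq_gauss] at h
  simp only [Pi.pow_apply]
  rw [← h]
  norm_num

lemma variance_const_add (X : Ω → ℝ) (hX : Integrable X P) (k : ℝ) :
    variance (fun ω => k + X ω) P = variance X P := by
  have hmean : (∫ ω, (k + X ω) ∂P) = k + ∫ ω, X ω ∂P := by
    rw [integral_add (integrable_const k) hX]; simp
  rw [variance, variance, evariance, evariance, hmean]
  congr 1
  exact lintegral_congr fun ω => by rw [add_sub_add_left_eq_sub]

lemma variance_lin {W V V' : Ω → ℝ} (hW : Measurable W) (hV : Measurable V) (hV' : Measurable V')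
    (hWl : Measure.map W P = gaussianReal 0 1) (hVl : Measure.map V P = gaussianReal 0 1)
    (hV'l : Measure.map V' P = gaussianReal 0 1)
    (hindep : iIndepFun ![W, V, V'] P)
    (c₀ c₁ c₂ : ℝ) :
    variance (fun ω => c₀ * W ω + c₁ * V ω + c₂ * V' ω) P = c₀ ^ 2 + c₁ ^ 2 + c₂ ^ 2 := by
  set X : Fin 3 → Ω → ℝ := ![W, V, V'] with hX
  set c : Fin 3 → ℝ := ![c₀, c₁, c₂] with hc
  have hXm : ∀ i, Measurable (X i) := by
    intro i; fin_cases i <;> simpa [hX]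
  have hXl : ∀ i, Measure.map (X i) P = gaussianReal 0 1 := by
    intro i; fin_cases i <;> simpa [hX]
  have hmem : ∀ i ∈ Finset.univ, MemLp (fun ω => c i * X i ω) 2 P := by
    intro i _
    exact (memLp_of_gauss (hXm i) (hXl i)).const_mul (c i)
  have hpair : Set.Pairwise ↑(Finset.univ : Finset (Fin 3))
      fun i j => IndepFun (fun ω => c i * X i ω) (fun ω => c j * X j ω) P := by
    intro i _ j _ hij
    exact (hindep.indepFun hij).comp (measurable_const_mul (c i)) (measurable_const_mul (c j))
  have hsum := IndepFun.variance_sum (μ := P) hmem hpair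
  have hfun : (∑ i : Fin 3, fun ω => c i * X i ω) = fun ω => c₀ * W ω + c₁ * V ω + c₂ * V' ω := by
    funext ω
    simp [Fin.sum_univ_three, hX, hc, add_assoc]
  rw [hfun] at hsum
  rw [hsum, Fin.sum_univ_three]
  have hvar : ∀ i, variance (fun ω => c i * X i ω) P = c i ^ 2 := by
    intro i
    rw [variance_const_mul, variance_of_gauss (hXm i) (hXl i), mul_one]
  rw [hvar 0, hvar 1, hvar 2]
  simp [hc]

end Aux

/-- Variance of the λ-target in the linear–Gaussian model:
`Var(u^λ) = 1 + γ²σ² + (σ²/D_t)(λ² - 2λ(γ(1-t) + ρt))` where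
`D_t = t²σ² + (1-t)²`, and this quadratic in `λ` is minimized at
`λ⋆(t) = γ(1-t) + ρt`. -/
theorem stmt11 {Ω : Type*} [m0 : MeasurableSpace Ω] (P : Measure Ω) [IsProbabilityMeasure P]
    (W V V' : Ω → ℝ) (hW : Measurable W) (hV : Measurable V) (hV' : Measurable V')
    (hlaw : ∀ U ∈ ({W, V, V'} : Set (Ω → ℝ)), Measure.map U P = gaussianReal 0 1)
    (hindep : iIndepFun ![W, V, V'] P)
    (t γ ρ σ r μ : ℝ) (ht : t ∈ Set.Ioo (0:ℝ) 1) (hγ : γ ∈ Set.Ioo (0:ℝ) 1)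
    (hρ : ρ ∈ Set.Icc (-1:ℝ) 1) (hσ : 0 < σ)
    (Dt a b : ℝ)
    (hDt : Dt = t ^ 2 * σ ^ 2 + (1 - t) ^ 2)
    (ha : a = -(σ * (1 - t)) / Dt) (hb : b = t * σ ^ 2 / Dt)
    (Z1' X0 C : Ω → ℝ)
    (hZ1' : ∀ ω, Z1' ω = μ + σ * W ω)
    (hX0 : ∀ ω, X0 ω = ρ * V' ω + Real.sqrt (1 - ρ ^ 2) * V ω)
    (hC : ∀ ω, C ω = a * W ω + b * V' ω)
    (u : ℝ → Ω → ℝ)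
    (hu : ∀ lam ω, u lam ω = (r + γ * Z1' ω) - X0 ω + lam * C ω) :
    (∀ lam : ℝ, variance (u lam) P
        = 1 + γ ^ 2 * σ ^ 2
          + σ ^ 2 / Dt * (lam ^ 2 - 2 * lam * (γ * (1 - t) + ρ * t))) ∧
    (∀ lam : ℝ, variance (u (γ * (1 - t) + ρ * t)) P ≤ variance (u lam) P) := by

  obtain ⟨ht0, ht1⟩ := ht
  have hWl : Measure.map W P = gaussianReal 0 1 := hlaw W (by simp)
  have hVl : Measure.map V P = gaussianReal 0 1 := hlaw V (by simp)
  have hV'l : Measure.map V' P = gaussianReal 0 1 := hlaw V' (by simp)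
  have hDt0 : 0 < Dt := by
    rw [hDt]
    have h1 : 0 < t ^ 2 * σ ^ 2 := by positivity
    nlinarith [sq_nonneg (1 - t)]
  have hρ2 : 1 - ρ ^ 2 ≥ 0 := by
    obtain ⟨h1, h2⟩ := hρ; nlinarith
  subst hDt
  have key : ∀ lam : ℝ, variance (u lam) P
      = (γ * σ + lam * a) ^ 2 + (1 - ρ ^ 2) + (lam * b - ρ) ^ 2 := by
    intro lam
    have hue : u lam = fun ω => (r + γ * μ) + ((γ * σ + lam * a) * W ω
        + (-(Real.sqrt (1 - ρ ^ 2))) * V ω + (lam * b - ρ) * V' ω) := by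
      funext ω
      rw [hu, hZ1', hX0, hC]
      ring
    rw [hue, variance_const_add _ ?_ _, variance_lin hW hV hV' hWl hVl hV'l hindep]
    · rw [neg_pow, Real.sq_sqrt hρ2]
      ring
    · refine Integrable.add (Integrable.add ?_ ?_) ?_ <;>
        exact ((memLp_of_gauss (by assumption) (by assumption)).const_mul _).integrable one_le_two
  have hpart1 : ∀ lam : ℝ, variance (u lam) P
      = 1 + γ ^ 2 * σ ^ 2
        + σ ^ 2 / (t ^ 2 * σ ^ 2 + (1 - t) ^ 2)
          * (lam ^ 2 - 2 * lam * (γ * (1 - t) + ρ * t)) := by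
    intro lam
    rw [key lam, ha, hb]
    field_simp [hDt0.ne']
    ring
  refine ⟨hpart1, fun lam => ?_⟩
  rw [hpart1, hpart1]
  have hq : 0 ≤ σ ^ 2 / (t ^ 2 * σ ^ 2 + (1 - t) ^ 2) := by positivity
  nlinarith [mul_nonneg hq (sq_nonneg (lam - (γ * (1 - t) + ρ * t)))]
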